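/- For every n ≥ 1 the following two identities hold: (r*_n)² − α r*_n = β_n R*_n R*_{n−1} and r_n² + β r_n = β_n R_n R_{n−1}. -/

import Mathlib

open MeasureTheory Real

/-- The generalized Jacobi weight `w(x;t) = (x-t)^γ x^α (1-x)^β`. -/
noncomputable def genJacobiWeight (α β γ t x : ℝ) : ℝ :=
  (x - t) ^ γ * x ^ α * (1 - x) ^ β

/-!
Let `L p = ∫₀¹ p w` and, for `c ∈ {0, 1}`, `M_c p = ∫₀¹ p w / (x - c)`; since `w(c) = 0`,
`M_c ((X - c) p) = L p`. Writing `p = p(c) + (X - c) q` and using orthogonality gives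
`M_c (p P_m) = p(c) M_c (P_m) + q_m h_m` whenever `deg p ≤ m + 1`. Expanding
`I = M_c (P_{n-1} P_n)` once through `P_n` and once through `P_{n-1}` gives
`I = P_n(c) M_c (P_{n-1}) + h_{n-1} = P_{n-1}(c) M_c (P_n)`, hence
`I (I - h_{n-1}) = M_c (P_n²) M_c (P_{n-1}²)`. Together with `h_n = β_n h_{n-1}` this is the first
identity for `c = 0`, where `r*_n = α I / h_{n-1}`, and the second for `c = 1`, where
`r_n = -β I / h_{n-1}`.
-/

open Polynomial

namespace OrthogonalPolynomials

section

variable {R : Type*} [CommRing R] {L M : R[X] →ₗ[R] R} {P : ℕ → R[X]} {h : ℕ → R}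

theorem map_mul_eq_coeff_mul (hmonic : ∀ n, (P n).Monic ∧ (P n).natDegree = n)
    (horth : ∀ m n, L (P m * P n) = if m = n then h n else 0)
    {m : ℕ} (q : R[X]) (hq : q.natDegree ≤ m) : L (q * P m) = q.coeff m * h m := by
  suffices ∀ N : ℕ, ∀ q : R[X], q.degree < N → N ≤ m + 1 → L (q * P m) = q.coeff m * h m from
    this (m + 1) q (degree_lt_iff_coeff_zero _ _ |>.2 fun j hj =>
      coeff_eq_zero_of_natDegree_lt (by omega)) le_rfl
  intro N
  induction N with
  | zero =>
    intro q hq _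
    have hq0 : q = 0 := ext fun j => by
      simpa using (degree_lt_iff_coeff_zero q 0).1 (by exact_mod_cast hq) j (Nat.zero_le j)
    simp [hq0]
  | succ N ih =>
    intro q hq hN
    set r := q - C (q.coeff N) * P N with hr
    have hcoeffP : ∀ j, N ≤ j → (P N).coeff j = if N = j then 1 else 0 := by
      intro j hj
      split_ifs with hNj
      · subst hNj
        simpa [(hmonic N).2] using (hmonic N).1.coeff_natDegree
      · exact coeff_eq_zero_of_natDegree_lt (by rw [(hmonic N).2]; omega)
    have hrdeg : r.degree < N := by
      rw [degree_lt_iff_coeff_zero] at hq ⊢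
      intro j hj
      rw [hr, coeff_sub, coeff_C_mul, hcoeffP j hj]
      split_ifs with hNj
      · subst hNj; ring
      · rw [hq j (by omega)]; ring
    have hq_eq : q = C (q.coeff N) * P N + r := by rw [hr]; ring
    rw [hq_eq, add_mul, map_add, mul_assoc, ← smul_eq_C_mul, map_smul, horth,
      ih r hrdeg (by omega), coeff_add, coeff_C_mul, hcoeffP m (by omega), smul_eq_mul]
    split_ifs <;> ring

theorem map_mul_eq_eval_mul_add (hmonic : ∀ n, (P n).Monic ∧ (P n).natDegree = n)
    (horth : ∀ m n, L (P m * P n) = if m = n then h n else 0)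
    {c : R} (hM : ∀ p, M ((X - C c) * p) = L p)
    {m : ℕ} (p : R[X]) (hp : (p /ₘ (X - C c)).natDegree ≤ m) :
    M (p * P m) = p.eval c * M (P m) + (p /ₘ (X - C c)).coeff m * h m := by
  have hp_eq : C (p.eval c) + (X - C c) * (p /ₘ (X - C c)) = p := by
    rw [← modByMonic_X_sub_C_eq_C_eval]
    exact modByMonic_add_div p _
  conv_lhs => rw [← hp_eq]
  rw [add_mul, map_add, C_mul', map_smul, smul_eq_mul, mul_assoc, hM,
    map_mul_eq_coeff_mul hmonic horth _ hp]

theorem map_mul_succ_mul_sub_eq [Nontrivial R] (hmonic : ∀ n, (P n).Monic ∧ (P n).natDegree = n)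
    (horth : ∀ m n, L (P m * P n) = if m = n then h n else 0)
    {c : R} (hM : ∀ p, M ((X - C c) * p) = L p) (k : ℕ) :
    M (P k * P (k + 1)) * (M (P k * P (k + 1)) - h k) =
      M (P (k + 1) * P (k + 1)) * M (P k * P k) := by
  have hdeg : ∀ n, (P n /ₘ (X - C c)).natDegree = n - 1 := fun n => by
    rw [natDegree_divByMonic _ (monic_X_sub_C c), (hmonic n).2, natDegree_X_sub_C]
  have hcoeff : ∀ n j, n ≤ j → (P n /ₘ (X - C c)).coeff j = 0 := fun n j hj => by
    refine coeff_eq_zero_of_degree_lt ((degree_divByMonic_lt _ _ (hmonic n).1.ne_zero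
      (by rw [degree_X_sub_C]; exact zero_lt_one)).trans_le ?_)
    rw [degree_eq_natDegree (hmonic n).1.ne_zero, (hmonic n).2]
    exact_mod_cast hj
  have hlead : (P (k + 1) /ₘ (X - C c)).coeff k = 1 := by
    have := leadingCoeff_divByMonic_of_monic (monic_X_sub_C c) (p := P (k + 1)) (by
      rw [degree_X_sub_C, degree_eq_natDegree (hmonic _).1.ne_zero, (hmonic _).2]
      exact_mod_cast Nat.le_add_left 1 k)
    rwa [leadingCoeff, hdeg, (hmonic _).1.leadingCoeff, Nat.add_sub_cancel] at this
  have hsq : ∀ n, M (P n * P n) = (P n).eval c * M (P n) := fun n => by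
    rw [map_mul_eq_eval_mul_add hmonic horth hM _ (by rw [hdeg]; omega), hcoeff n n le_rfl,
      zero_mul, add_zero]
  have hI₁ : M (P k * P (k + 1)) = (P (k + 1)).eval c * M (P k) + h k := by
    rw [mul_comm, map_mul_eq_eval_mul_add hmonic horth hM _ (by rw [hdeg]; omega), hlead, one_mul]
  have hI₂ : M (P k * P (k + 1)) = (P k).eval c * M (P (k + 1)) := by
    rw [map_mul_eq_eval_mul_add hmonic horth hM _ (by rw [hdeg]; omega), hcoeff k (k + 1)
      (by omega), zero_mul, add_zero]
  rw [hsq, hsq]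
  linear_combination (M (P k * P (k + 1)) - h k) * hI₂ + (P k).eval c * M (P (k + 1)) * hI₁

theorem h_succ_eq_mul (hmonic : ∀ n, (P n).Monic ∧ (P n).natDegree = n)
    (horth : ∀ m n, L (P m * P n) = if m = n then h n else 0) {k : ℕ} {a b : R}
    (hrec : X * P (k + 1) = P (k + 2) + C a * P (k + 1) + C b * P k) :
    h (k + 1) = b * h k := by
  have hcoeff : (X * P k).coeff (k + 1) = 1 := by
    simpa [coeff_X_mul, (hmonic k).2] using (hmonic k).1.coeff_natDegree
  have hdeg : (X * P k).natDegree ≤ k + 1 :=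
    natDegree_mul_le.trans (by rw [(hmonic k).2]; linarith [natDegree_X_le (R := R)])
  have hexpand :
      X * P k * P (k + 1) = P k * P (k + 2) + a • (P k * P (k + 1)) + b • (P k * P k) := by
    rw [smul_eq_C_mul, smul_eq_C_mul]
    linear_combination P k * hrec
  calc h (k + 1) = L (X * P k * P (k + 1)) := by
        rw [map_mul_eq_coeff_mul hmonic horth _ hdeg, hcoeff, one_mul]
    _ = b * h k := by
        rw [hexpand, map_add, map_add, map_smul, map_smul, horth, horth, horth]
        simp

end

theorem div_mul_map_sq_sub_eq {K : Type*} [Field K] {L M : K[X] →ₗ[K] K} {P : ℕ → K[X]}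
    {h : ℕ → K} (hmonic : ∀ n, (P n).Monic ∧ (P n).natDegree = n)
    (horth : ∀ m n, L (P m * P n) = if m = n then h n else 0)
    {c : K} (hM : ∀ p, M ((X - C c) * p) = L p) {k : ℕ} {a b : K}
    (hrec : X * P (k + 1) = P (k + 2) + C a * P (k + 1) + C b * P k) (hk : h (k + 1) ≠ 0)
    (κ : K) :
    (κ / h k * M (P k * P (k + 1))) ^ 2 - κ * (κ / h k * M (P k * P (k + 1))) =
      b * (κ / h (k + 1) * M (P (k + 1) * P (k + 1)) * (κ / h k * M (P k * P k))) := by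
  have hh := h_succ_eq_mul hmonic horth hrec
  have hk' : h k ≠ 0 := fun h0 => hk (by rw [hh, h0, mul_zero])
  have hb : b ≠ 0 := fun h0 => hk (by rw [hh, h0, zero_mul])
  have key := map_mul_succ_mul_sub_eq hmonic horth hM k
  rw [hh]
  field_simp
  linear_combination κ ^ 2 * key

end OrthogonalPolynomials

noncomputable def intervalIntegralFunctional (a b : ℝ) (v : ℝ → ℝ)
    (hv : ∀ p : ℝ[X], IntervalIntegrable (fun x => p.eval x * v x) volume a b) :
    ℝ[X] →ₗ[ℝ] ℝ where
  toFun p := ∫ x in a..b, p.eval x * v x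
  map_add' p q := by
    simp only [eval_add, add_mul]
    exact intervalIntegral.integral_add (hv p) (hv q)
  map_smul' r p := by
    simp only [eval_smul, smul_eq_mul, mul_assoc, intervalIntegral.integral_const_mul,
      RingHom.id_apply]

@[simp]
theorem intervalIntegralFunctional_apply {a b : ℝ} {v : ℝ → ℝ} (hv) (p : ℝ[X]) :
    intervalIntegralFunctional a b v hv p = ∫ x in a..b, p.eval x * v x :=
  rfl

theorem intervalIntegralFunctional_X_sub_C_mul {a b c : ℝ} {w : ℝ → ℝ} (hw) (hv)
    (hc : w c = 0) (p : ℝ[X]) :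
    intervalIntegralFunctional a b (fun x => w x / (x - c)) hv ((X - C c) * p) =
      intervalIntegralFunctional a b w hw p := by
  simp only [intervalIntegralFunctional_apply, eval_mul, eval_sub, eval_X, eval_C]
  congr 1 with x
  rcases eq_or_ne x c with rfl | hx
  · simp [hc]
  · field_simp [sub_ne_zero.2 hx]

section GenJacobiWeight

variable {α β γ t : ℝ}

theorem genJacobiWeight_zero (hα : α ≠ 0) : genJacobiWeight α β γ t 0 = 0 := by
  simp [genJacobiWeight, zero_rpow hα]

theorem genJacobiWeight_one (hβ : β ≠ 0) : genJacobiWeight α β γ t 1 = 0 := by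
  simp [genJacobiWeight, zero_rpow hβ]

theorem continuousOn_sub_const_rpow (ht : t ∉ Set.Icc (0 : ℝ) 1) :
    ContinuousOn (fun x => (x - t) ^ γ) (Set.Icc 0 1) :=
  (continuousOn_id.sub continuousOn_const).rpow_const fun _ hx =>
    Or.inl (sub_ne_zero.2 (ne_of_mem_of_not_mem hx ht))

theorem intervalIntegrable_eval_mul_genJacobiWeight (hα : 0 ≤ α) (hβ : 0 ≤ β)
    (ht : t ∉ Set.Icc (0 : ℝ) 1) (p : ℝ[X]) :
    IntervalIntegrable (fun x => p.eval x * genJacobiWeight α β γ t x) volume 0 1 := by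
  refine ContinuousOn.intervalIntegrable ?_
  rw [Set.uIcc_of_le zero_le_one]
  unfold genJacobiWeight
  exact p.continuousOn.mul (((continuousOn_sub_const_rpow ht).mul
    (continuousOn_id.rpow_const fun _ _ => Or.inr hα)).mul
    ((continuousOn_const.sub continuousOn_id).rpow_const fun _ _ => Or.inr hβ))

theorem intervalIntegrable_eval_mul_genJacobiWeight_div_sub_zero (hα : 0 < α) (hβ : 0 ≤ β)
    (ht : t ∉ Set.Icc (0 : ℝ) 1) (p : ℝ[X]) :
    IntervalIntegrable (fun x => p.eval x * (genJacobiWeight α β γ t x / (x - 0))) volume 0 1 := by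
  have hg : ContinuousOn (fun x => p.eval x * (x - t) ^ γ * (1 - x) ^ β) (Set.uIcc 0 1) := by
    rw [Set.uIcc_of_le zero_le_one]
    exact (p.continuousOn.mul (continuousOn_sub_const_rpow ht)).mul
      ((continuousOn_const.sub continuousOn_id).rpow_const fun _ _ => Or.inr hβ)
  refine ((intervalIntegral.intervalIntegrable_rpow' (r := α - 1) (by linarith)).continuousOn_mul
    hg).congr_uIoo fun x hx => ?_
  rw [Set.uIoo_of_le zero_le_one] at hx
  simp only [genJacobiWeight, sub_zero, rpow_sub_one hx.1.ne']
  ring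

theorem intervalIntegrable_eval_mul_genJacobiWeight_div_sub_one (hα : 0 ≤ α) (hβ : 0 < β)
    (ht : t ∉ Set.Icc (0 : ℝ) 1) (p : ℝ[X]) :
    IntervalIntegrable (fun x => p.eval x * (genJacobiWeight α β γ t x / (x - 1))) volume 0 1 := by
  have hg : ContinuousOn (fun x => -(p.eval x * (x - t) ^ γ * x ^ α)) (Set.uIcc 0 1) := by
    rw [Set.uIcc_of_le zero_le_one]
    exact ((p.continuousOn.mul (continuousOn_sub_const_rpow ht)).mul
      (continuousOn_id.rpow_const fun _ _ => Or.inr hα)).neg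
  have hsing : IntervalIntegrable (fun x : ℝ => (1 - x) ^ (β - 1)) volume 0 1 := by
    have := (intervalIntegral.intervalIntegrable_rpow' (a := 0) (b := 1) (r := β - 1)
      (by linarith)).comp_sub_left 1
    simpa using this.symm
  refine (hsing.continuousOn_mul hg).congr_uIoo fun x hx => ?_
  rw [Set.uIoo_of_le zero_le_one] at hx
  have hx1 : 1 - x ≠ 0 := by linarith [hx.2]
  have hx1' : x - 1 ≠ 0 := by linarith [hx.2]
  simp only [genJacobiWeight, rpow_sub_one hx1]
  field_simp
  ring

end GenJacobiWeight

theorem statement9_general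
    (α β γ t : ℝ) (hα : 0 < α) (hβ : 0 < β) (ht : t < 0)
    (P : ℕ → Polynomial ℝ) (h : ℕ → ℝ)
    (hmonic : ∀ n, (P n).Monic ∧ (P n).natDegree = n)
    (hpos : ∀ n, 0 < h n)
    (horth : ∀ m n, (∫ x in (0:ℝ)..1,
        (P m).eval x * (P n).eval x * genJacobiWeight α β γ t x)
      = if m = n then h n else 0)
    (a b : ℕ → ℝ)
    (hrec : ∀ n, ∀ x : ℝ, x * (P n).eval x
      = (P (n + 1)).eval x + a n * (P n).eval x + b n * (P (n - 1)).eval x)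
    (R Rs r rs : ℕ → ℝ)
    (hR : ∀ n, R n = β / h n *
      ∫ y in (0:ℝ)..1, ((P n).eval y) ^ 2 * genJacobiWeight α β γ t y / (1 - y))
    (hRs : ∀ n, Rs n = α / h n *
      ∫ y in (0:ℝ)..1, ((P n).eval y) ^ 2 * genJacobiWeight α β γ t y / y)
    (hr : ∀ n, 1 ≤ n → r n = β / h (n - 1) *
      ∫ y in (0:ℝ)..1, (P (n - 1)).eval y * (P n).eval y * genJacobiWeight α β γ t y / (1 - y))
    (hrs : ∀ n, 1 ≤ n → rs n = α / h (n - 1) *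
      ∫ y in (0:ℝ)..1, (P (n - 1)).eval y * (P n).eval y * genJacobiWeight α β γ t y / y)
    :
    ∀ n : ℕ, 1 ≤ n →
      (rs n) ^ 2 - α * rs n = b n * (Rs n * Rs (n - 1)) ∧
      (r n) ^ 2 + β * r n = b n * (R n * R (n - 1)) := by
  intro n hn
  obtain ⟨k, rfl⟩ : ∃ k, n = k + 1 := ⟨n - 1, by omega⟩
  have ht' : t ∉ Set.Icc (0 : ℝ) 1 := fun hmem => by linarith [hmem.1]
  set w := genJacobiWeight α β γ t
  have hw := intervalIntegrable_eval_mul_genJacobiWeight (γ := γ) hα.le hβ.le ht'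
  have hv₀ := intervalIntegrable_eval_mul_genJacobiWeight_div_sub_zero (γ := γ) hα hβ.le ht'
  have hv₁ := intervalIntegrable_eval_mul_genJacobiWeight_div_sub_one (γ := γ) hα.le hβ ht'
  let L := intervalIntegralFunctional 0 1 w hw
  let M₀ := intervalIntegralFunctional 0 1 (fun x => w x / (x - 0)) hv₀
  let M₁ := intervalIntegralFunctional 0 1 (fun x => w x / (x - 1)) hv₁
  have hLorth : ∀ m n, L (P m * P n) = if m = n then h n else 0 := fun m n => by
    simpa [L, eval_mul] using horth m n
  have hrec' : X * P (k + 1) = P (k + 2) + C (a (k + 1)) * P (k + 1) + C (b (k + 1)) * P k :=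
    Polynomial.funext fun x => by simpa using hrec (k + 1) x
  have key₀ := OrthogonalPolynomials.div_mul_map_sq_sub_eq hmonic hLorth
    (intervalIntegralFunctional_X_sub_C_mul hw hv₀ (genJacobiWeight_zero hα.ne')) hrec'
    (hpos _).ne' α
  have key₁ := OrthogonalPolynomials.div_mul_map_sq_sub_eq hmonic hLorth
    (intervalIntegralFunctional_X_sub_C_mul hw hv₁ (genJacobiWeight_one hβ.ne')) hrec'
    (hpos _).ne' (-β)
  have hM₀ : ∀ p q : ℝ[X], ∫ y in (0:ℝ)..1, p.eval y * q.eval y * w y / y = M₀ (p * q) :=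
    fun p q => by simp [M₀, eval_mul, mul_div_assoc]
  have hM₁ : ∀ p q : ℝ[X], ∫ y in (0:ℝ)..1, p.eval y * q.eval y * w y / (1 - y) = -M₁ (p * q) :=
    fun p q => by
      simp only [M₁, intervalIntegralFunctional_apply, ← intervalIntegral.integral_neg, eval_mul]
      congr 1 with y
      rw [← neg_sub y, div_neg, mul_div_assoc, neg_mul_eq_mul_neg]
  simp only [Nat.add_sub_cancel, hrs _ hn, hr _ hn, hRs, hR, sq, hM₀, hM₁]
  exact ⟨by linear_combination key₀, by linear_combination key₁⟩

theorem statement9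
    (α β γ t : ℝ) (hα : 0 < α) (hβ : 0 < β) (ht : t < 0)
    (P : ℕ → Polynomial ℝ) (h : ℕ → ℝ)
    (hmonic : ∀ n, (P n).Monic ∧ (P n).natDegree = n)
    (hpos : ∀ n, 0 < h n)
    (horth : ∀ m n, (∫ x in (0:ℝ)..1,
        (P m).eval x * (P n).eval x * genJacobiWeight α β γ t x)
      = if m = n then h n else 0)
    (a b : ℕ → ℝ) (hb0 : b 0 = 0)
    (hrec : ∀ n, ∀ x : ℝ, x * (P n).eval x
      = (P (n + 1)).eval x + a n * (P n).eval x + b n * (P (n - 1)).eval x)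
    (R Rs r rs : ℕ → ℝ)
    (hR : ∀ n, R n = β / h n *
      ∫ y in (0:ℝ)..1, ((P n).eval y) ^ 2 * genJacobiWeight α β γ t y / (1 - y))
    (hRs : ∀ n, Rs n = α / h n *
      ∫ y in (0:ℝ)..1, ((P n).eval y) ^ 2 * genJacobiWeight α β γ t y / y)
    (hr : ∀ n, 1 ≤ n → r n = β / h (n - 1) *
      ∫ y in (0:ℝ)..1, (P (n - 1)).eval y * (P n).eval y * genJacobiWeight α β γ t y / (1 - y))
    (hrs : ∀ n, 1 ≤ n → rs n = α / h (n - 1) *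
      ∫ y in (0:ℝ)..1, (P (n - 1)).eval y * (P n).eval y * genJacobiWeight α β γ t y / y)
    :
    ∀ n : ℕ, 1 ≤ n →
      (rs n) ^ 2 - α * rs n = b n * (Rs n * Rs (n - 1)) ∧
      (r n) ^ 2 + β * r n = b n * (R n * R (n - 1)) :=
  statement9_general α β γ t hα hβ ht P h hmonic hpos horth a b hrec R Rs r rs hR hRs hr hrs
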